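/- Let T be a Morse tile and v a vertex not belonging to the vertex set of T. Then the cone v * T is a closed simplex if and only if T is a closed simplex, and is a regular Morse tile otherwise. Likewise, the cone deprived of its basis v̇ * T is a Morse tile which is critical if and only if T is critical and different from a closed simplex, and in that case its index equals the index of T plus 1. -/
import Mathlib


/-!
Common combinatorial framework for Morse shellings of simplicial complexes,
following J.-Y. Welschinger, "Morse shellings out of discrete Morse functions".
-/

namespace MorseShelling

variable {V : Type*} [DecidableEq V] {W : Type*} [DecidableEq W]

/-- A (finite, combinatorial) simplicial complex: a downward-closed collection of
finite subsets (simplices) of the vertex type. -/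
def IsComplex (K : Finset (Finset V)) : Prop :=
  ∀ σ ∈ K, ∀ τ ⊆ σ, τ ∈ K

/-- A relative simplicial complex `S = K \ L`, recorded as the pair `(K, L)`. -/
structure RelCplx (V : Type*) where
  K : Finset (Finset V)
  L : Finset (Finset V)

/-- The faces of a relative simplicial complex. -/
def RelCplx.faces (S : RelCplx V) : Finset (Finset V) := S.K \ S.L

/-- Validity of a relative simplicial complex: both members are complexes and
`L` is a subcomplex of `K`. -/
def RelCplx.IsValid (S : RelCplx V) : Prop :=
  IsComplex S.K ∧ IsComplex S.L ∧ S.L ⊆ S.K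

/-- Join of two collections of faces (on disjoint vertex supports). -/
def joinF (K₁ K₂ : Finset (Finset V)) : Finset (Finset V) :=
  (K₁ ×ˢ K₂).image fun p => p.1 ∪ p.2

/-- Join of two relative simplicial complexes:
`(K₁ * K₂) \ ((L₁ * K₂) ∪ (K₁ * L₂))`. -/
def RelCplx.join (S₁ S₂ : RelCplx V) : RelCplx V :=
  ⟨joinF S₁.K S₂.K, joinF S₁.L S₂.K ∪ joinF S₁.K S₂.L⟩

/-- The star of a simplex `σ` in `K` : all faces `τ` with `σ ∪ τ ∈ K`. -/
def star (K : Finset (Finset V)) (σ : Finset V) : Finset (Finset V) :=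
  K.filter fun τ => σ ∪ τ ∈ K

/-- The link of a simplex `σ` in `K` : all faces `τ` of the star disjoint from `σ`. -/
def link (K : Finset (Finset V)) (σ : Finset V) : Finset (Finset V) :=
  K.filter fun τ => σ ∪ τ ∈ K ∧ σ ∩ τ = ∅

/-- The star of a simplex in a relative complex, `st_S(σ) = st_K(σ) \ st_L(σ)`. -/
def RelCplx.starR (S : RelCplx V) (σ : Finset V) : RelCplx V :=
  ⟨star S.K σ, star S.L σ⟩

/-- The link of a simplex in a relative complex, `lk_S(σ) = lk_K(σ) \ lk_L(σ)`. -/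
def RelCplx.linkR (S : RelCplx V) (σ : Finset V) : RelCplx V :=
  ⟨link S.K σ, link S.L σ⟩

/-- The boundary complex of a simplex: all its proper faces (including `∅`). -/
def boundary (σ : Finset V) : Finset (Finset V) := σ.powerset.erase σ

/-- First barycentric subdivision: the faces are the (possibly empty) flags
`∅ ≠ σ₀ ⊊ σ₁ ⊊ ... ⊊ σ_q` of nonempty faces of `K`, a nonempty face `σ` of `K`
becoming the vertex `σ̂ = σ`. By convention `sd ∅ = ∅`. -/
def sd (K : Finset (Finset V)) : Finset (Finset (Finset V)) :=
  if K = ∅ then ∅ else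
    (K.erase ∅).powerset.filter fun c => ∀ a ∈ c, ∀ b ∈ c, a ⊆ b ∨ b ⊆ a

/-- First barycentric subdivision of a relative complex: `sd (K \ L) = sd K \ sd L`. -/
def RelCplx.sdR (S : RelCplx V) : RelCplx (Finset V) := ⟨sd S.K, sd S.L⟩

/-- An (absolute) simplicial complex seen as a relative one. -/
def toRel (K : Finset (Finset V)) : RelCplx V := ⟨K, ∅⟩

/-- The vertex support of a relative complex. -/
def suppK (S : RelCplx V) : Finset V := S.K.sup id

/-- The ridges (codimension one faces) of a simplex. -/
def ridges (σ : Finset V) : Finset (Finset V) := σ.image fun v => σ.erase v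

/-- The subcomplex of the simplex `σ` consisting of the faces contained in some
member of `R`. -/
def below (σ : Finset V) (R : Finset (Finset V)) : Finset (Finset V) :=
  σ.powerset.filter fun τ => ∃ ρ ∈ R, τ ⊆ ρ

/-- The restriction set of the basic tile `σ \ R`: the face spanned by the
vertices opposite to the missing ridges `R`. -/
def restSet (σ : Finset V) (R : Finset (Finset V)) : Finset V :=
  σ.filter fun v => σ.erase v ∈ R

/-- A basic tile of dimension `n` and order `k`: an `n`-simplex deprived of `k`
of its ridges (together with all the faces contained in them). -/
def IsBasicTile (S : RelCplx V) (n k : ℕ) : Prop :=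
  ∃ σ : Finset V, σ.card = n + 1 ∧ S.K = σ.powerset ∧
    ∃ R ⊆ ridges σ, R.card = k ∧ S.L = below σ R

/-- A Morse tile of dimension `n` and order `k`: a basic tile, possibly further
deprived of a unique face of higher codimension (its Morse face). -/
def IsMorseTile (S : RelCplx V) (n k : ℕ) : Prop :=
  ∃ σ : Finset V, σ.card = n + 1 ∧ S.K = σ.powerset ∧
    ∃ R ⊆ ridges σ, R.card = k ∧
      (S.L = below σ R ∨
        ∃ μ ⊆ σ, μ ∉ below σ R ∧ μ.card + 2 ≤ σ.card ∧
          S.L = below σ R ∪ below σ {μ})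

/-- A critical tile of dimension `n` and index `k`: either a closed simplex
(index `0`), or a basic tile of order `k` deprived of its restriction set
(this includes the dotted simplex for `k = 0` and the open simplex for `k = n`). -/
def IsCriticalTile (S : RelCplx V) (n k : ℕ) : Prop :=
  ∃ σ : Finset V, σ.card = n + 1 ∧ S.K = σ.powerset ∧
    ((k = 0 ∧ S.L = ∅) ∨
      (k ≤ n ∧ ∃ R ⊆ ridges σ, R.card = k ∧
        S.L = below σ R ∪ below σ {restSet σ R}))

/-- A closed simplex, as a tile. -/
def IsClosedSimplexTile (S : RelCplx V) : Prop :=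
  ∃ σ : Finset V, S.K = σ.powerset ∧ S.L = ∅

/-- An open simplex, as a tile: deprived of its whole boundary, incl. the empty face. -/
def IsOpenSimplexTile (S : RelCplx V) : Prop :=
  ∃ σ : Finset V, σ ≠ ∅ ∧ S.K = σ.powerset ∧ S.L = σ.powerset.erase σ

/-- The closed simplex on vertex set `σ`, as a relative complex. -/
def closedT (σ : Finset V) : RelCplx V := ⟨σ.powerset, ∅⟩

/-- The open simplex on vertex set `σ`. -/
def openT (σ : Finset V) : RelCplx V := ⟨σ.powerset, σ.powerset.erase σ⟩

/-- The closed simplex deprived of its empty face, `σ̇` (the neutral tile when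
`σ = ∅`, so that empty factors may be dropped from joins). -/
def dotT (σ : Finset V) : RelCplx V := ⟨σ.powerset, if σ = ∅ then ∅ else {∅}⟩

/-- The Morse tile `σ * θ̊ * τ̇`. -/
def splitTile (σ θ τ : Finset V) : RelCplx V :=
  (closedT σ).join ((openT θ).join (dotT τ))

/-- A tiling of a relative simplicial complex by `N` relative facets: the tiles
are relative simplices whose underlying simplices are facets, and their faces
partition the faces of `S`. -/
structure Tiling (S : RelCplx W) (N : ℕ) where
  tile : Fin N → RelCplx W
  isFacet : ∀ i, ∃ σ ∈ S.K, (∀ τ ∈ S.K, σ ⊆ τ → τ = σ) ∧ (tile i).K = σ.powerset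
  subL : ∀ i, (tile i).L ⊆ (tile i).K
  disj : ∀ i j, i ≠ j → Disjoint (tile i).faces (tile j).faces
  cover : (Finset.univ : Finset (Fin N)).biUnion (fun i => (tile i).faces) = S.faces

/-- The union of the faces of the first `p` tiles of a tiling. -/
def Tiling.prefixFaces {S : RelCplx W} {N : ℕ} (T : Tiling S N) (p : ℕ) :
    Finset (Finset W) :=
  (Finset.univ.filter fun i : Fin N => (i : ℕ) < p).biUnion fun i => (T.tile i).faces

/-- A tiling is a shelling when each of the sets of faces of `S_p = K_p \ L`
is a relative subcomplex, i.e. `L ∪ (tiles of index < p)` is a complex. -/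
def Tiling.IsShelling {S : RelCplx W} {N : ℕ} (T : Tiling S N) : Prop :=
  ∀ p ≤ N, IsComplex (S.L ∪ T.prefixFaces p)

/-- A (shelled) tiling begins with a set `F` of faces when some initial segment
of its tiles partitions exactly `F`. -/
def Tiling.BeginsWith {S : RelCplx W} {N : ℕ} (T : Tiling S N)
    (F : Finset (Finset W)) : Prop :=
  ∃ p ≤ N, T.prefixFaces p = F

/-- A Morse tiling: all tiles are Morse tiles. -/
def Tiling.IsMorse {S : RelCplx W} {N : ℕ} (T : Tiling S N) : Prop :=
  ∀ i, ∃ n k, IsMorseTile (T.tile i) n k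

/-- An h-tiling: all tiles are basic or critical tiles. -/
def Tiling.IsH {S : RelCplx W} {N : ℕ} (T : Tiling S N) : Prop :=
  ∀ i, (∃ n k, IsBasicTile (T.tile i) n k) ∨ (∃ n k, IsCriticalTile (T.tile i) n k)

/-- `f` induces a simplicial isomorphism from `A` onto `B` (both viewed through
their collections of faces). -/
def IsSimplicialIso (f : V → W) (A : Finset (Finset V)) (B : Finset (Finset W)) : Prop :=
  Set.BijOn (fun σ : Finset V => σ.image f) ↑A ↑B

/-- `f` induces an isomorphism of relative simplicial complexes. -/
def IsRelIso (f : V → W) (S : RelCplx V) (S' : RelCplx W) : Prop :=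
  Set.BijOn (fun σ : Finset V => σ.image f) ↑S.K ↑S'.K ∧
    Set.BijOn (fun σ : Finset V => σ.image f) ↑S.L ↑S'.L

/-- The first derived neighborhood `N(L, K)` of a subcomplex `L` in `K` : the union
of the stars in `sd K` of the vertices of `L`. -/
def derivedNbhd (L K : Finset (Finset V)) : Finset (Finset (Finset V)) :=
  (L.filter fun s => s.card = 1).biUnion fun s => star (sd K) {s}

/-- The faces of the derived neighborhood `N(T, S)` of a tile `T` in a relative
complex `S`: the union of the relative stars in `sd S` of the vertices of `T`. -/
def relDerivedNbhd (T S : RelCplx V) : Finset (Finset (Finset V)) :=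
  ((suppK T).biUnion fun v => ((S.sdR).starR {({v} : Finset V)}).faces) ∩ (S.sdR).faces

/-- A discrete Morse function on the finite simplicial complex `K`. -/
def IsDiscreteMorse (K : Finset (Finset V)) (f : Finset V → ℝ) : Prop :=
  ∀ σ ∈ K, σ ≠ ∅ →
    (K.filter fun τ => σ ⊂ τ ∧ f τ ≤ f σ).card ≤ 1 ∧
    (K.filter fun θ => θ ≠ ∅ ∧ θ ⊂ σ ∧ f σ ≤ f θ).card ≤ 1

/-- A critical face of a discrete Morse function. -/
def IsCriticalFace (K : Finset (Finset V)) (f : Finset V → ℝ) (σ : Finset V) : Prop :=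
  σ ∈ K ∧ σ ≠ ∅ ∧ (∀ τ ∈ K, σ ⊂ τ → f σ < f τ) ∧
    ∀ θ ∈ K, θ ≠ ∅ → θ ⊂ σ → f θ < f σ

/-- An elementary collapse: removal of a facet `τ` together with a ridge `θ` of it
contained in no other facet. -/
def ElementaryCollapse (K K' : Finset (Finset V)) : Prop :=
  ∃ τ ∈ K, ∃ θ ∈ K, θ ⊆ τ ∧ τ.card = θ.card + 1 ∧
    (∀ ρ ∈ K, τ ⊆ ρ → ρ = τ) ∧
    (∀ ρ ∈ K, θ ⊆ ρ → ρ = θ ∨ ρ = τ) ∧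
    K' = (K.erase τ).erase θ

/-- A finite simplicial complex is collapsible when some finite sequence of
elementary collapses reduces it to a single vertex. -/
def Collapsible (K : Finset (Finset V)) : Prop :=
  ∃ v : V, Relation.ReflTransGen ElementaryCollapse K {∅, {v}}

lemma erase_subset_iff' {τ σ : Finset V} {v : V} : τ.erase v ⊆ σ ↔ τ ⊆ insert v σ := by
  constructor
  · intro h x hx
    by_cases hxv : x = v
    · simp [hxv]
    · exact Finset.mem_insert_of_mem (h (Finset.mem_erase.2 ⟨hxv, hx⟩))
  · intro h x hx
    obtain ⟨hxv, hxτ⟩ := Finset.mem_erase.1 hx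
    rcases Finset.mem_insert.1 (h hxτ) with h' | h'
    · exact absurd h' hxv
    · exact h'

lemma subset_insert_iff' {τ σ : Finset V} {v : V} (hvτ : v ∉ τ) (hvσ : v ∉ σ) :
    τ ⊆ insert v σ ↔ τ ⊆ σ := by
  constructor
  · intro h x hx
    rcases Finset.mem_insert.1 (h hx) with h' | h'
    · exact absurd (h' ▸ hx) hvτ
    · exact h'
  · intro h; exact h.trans (Finset.subset_insert _ _)

lemma mem_joinF {A B : Finset (Finset V)} {τ : Finset V} :
    τ ∈ joinF A B ↔ ∃ a ∈ A, ∃ b ∈ B, a ∪ b = τ := by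
  simp [joinF, Finset.mem_product]
  constructor
  · rintro ⟨a, b, ⟨ha, hb⟩, h⟩; exact ⟨a, ha, b, hb, h⟩
  · rintro ⟨a, ha, b, hb, h⟩; exact ⟨a, b, ⟨ha, hb⟩, h⟩

lemma joinF_empty_left (B : Finset (Finset V)) : joinF ∅ B = ∅ := by
  simp [joinF]

lemma joinF_dot_left (B : Finset (Finset V)) : joinF {(∅ : Finset V)} B = B := by
  ext τ; simp [mem_joinF]

lemma mem_cone {v : V} {X : Finset (Finset V)} (hX : ∀ τ ∈ X, v ∉ τ) {τ : Finset V} :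
    τ ∈ joinF ({v} : Finset V).powerset X ↔ τ.erase v ∈ X := by
  rw [mem_joinF]
  constructor
  · rintro ⟨a, ha, b, hb, rfl⟩
    have hvb : v ∉ b := hX b hb
    rcases Finset.subset_singleton_iff.1 (Finset.mem_powerset.1 ha) with rfl | rfl
    · rw [Finset.empty_union, Finset.erase_eq_of_notMem hvb]; exact hb
    · rw [← Finset.insert_eq, Finset.erase_insert hvb]; exact hb
  · intro h
    by_cases hvτ : v ∈ τ
    · exact ⟨{v}, by simp, τ.erase v, h, by rw [← Finset.insert_eq, Finset.insert_erase hvτ]⟩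
    · exact ⟨∅, by simp, τ.erase v, h, by rw [Finset.empty_union, Finset.erase_eq_of_notMem hvτ]⟩

lemma mem_below {σ : Finset V} {R : Finset (Finset V)} {τ : Finset V} :
    τ ∈ below σ R ↔ τ ⊆ σ ∧ ∃ ρ ∈ R, τ ⊆ ρ := by
  simp [below]

lemma below_union (σ : Finset V) (A B : Finset (Finset V)) :
    below σ (A ∪ B) = below σ A ∪ below σ B := by
  ext τ; simp only [mem_below, Finset.mem_union]; aesop

lemma mem_restSet {σ : Finset V} {R : Finset (Finset V)} {w : V} :
    w ∈ restSet σ R ↔ w ∈ σ ∧ σ.erase w ∈ R := by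
  simp [restSet]

lemma mem_ridges {σ ρ : Finset V} : ρ ∈ ridges σ ↔ ∃ w ∈ σ, σ.erase w = ρ := by
  simp [ridges]

lemma insert_inj' {v : V} {a b : Finset V} (ha : v ∉ a) (hb : v ∉ b)
    (h : insert v a = insert v b) : a = b := by
  rw [← Finset.erase_insert ha, ← Finset.erase_insert hb, h]

lemma coneK {v : V} {σ : Finset V} (hv : v ∉ σ) :
    joinF ({v} : Finset V).powerset σ.powerset = (insert v σ).powerset := by
  ext τ
  rw [mem_cone (fun τ hτ hvτ => hv (Finset.mem_powerset.1 hτ hvτ)), Finset.mem_powerset,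
    Finset.mem_powerset, erase_subset_iff']


lemma coneBelow {v : V} {σ : Finset V} (hv : v ∉ σ) {R : Finset (Finset V)}
    (hR : ∀ ρ ∈ R, ρ ⊆ σ) :
    joinF ({v} : Finset V).powerset (below σ R) = below (insert v σ) (R.image (insert v)) := by
  ext τ
  rw [mem_cone (fun τ hτ hvτ => hv ((mem_below.1 hτ).1 hvτ)), mem_below, mem_below,
    erase_subset_iff']
  constructor
  · rintro ⟨h1, ρ, hρ, h2⟩
    exact ⟨h1, insert v ρ, Finset.mem_image_of_mem _ hρ, erase_subset_iff'.1 h2⟩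
  · rintro ⟨h1, ρ', hρ', h2⟩
    obtain ⟨ρ, hρ, rfl⟩ := Finset.mem_image.1 hρ'
    exact ⟨h1, ρ, hρ, erase_subset_iff'.2 h2⟩

lemma below_self_ridge {v : V} {σ : Finset V} (hv : v ∉ σ) :
    below (insert v σ) {σ} = σ.powerset := by
  ext τ
  simp only [mem_below, Finset.mem_powerset, Finset.mem_singleton]
  constructor
  · rintro ⟨h1, ρ, rfl, h2⟩; exact h2
  · intro h; exact ⟨h.trans (Finset.subset_insert _ _), σ, rfl, h⟩

lemma sigma_not_mem_below {σ : Finset V} {R : Finset (Finset V)} (hR : R ⊆ ridges σ) :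
    σ ∉ below σ R := by
  rw [mem_below]
  rintro ⟨-, ρ, hρ, hsub⟩
  obtain ⟨w, hw, rfl⟩ := mem_ridges.1 (hR hρ)
  exact (Finset.mem_erase.1 (hsub hw)).1 rfl

lemma ridge_cone {v : V} {σ : Finset V} (hv : v ∉ σ) {ρ : Finset V} (hρ : ρ ∈ ridges σ) :
    insert v ρ ∈ ridges (insert v σ) := by
  obtain ⟨w, hw, rfl⟩ := mem_ridges.1 hρ
  refine mem_ridges.2 ⟨w, Finset.mem_insert_of_mem hw, ?_⟩
  rw [Finset.erase_insert_of_ne (fun h : v = w => hv (h ▸ hw))]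

lemma sigma_mem_ridges_cone {v : V} {σ : Finset V} (hv : v ∉ σ) :
    σ ∈ ridges (insert v σ) :=
  mem_ridges.2 ⟨v, Finset.mem_insert_self _ _, Finset.erase_insert hv⟩

lemma card_image_insert {v : V} {R : Finset (Finset V)} (hR : ∀ ρ ∈ R, v ∉ ρ) :
    (R.image (insert v)).card = R.card :=
  Finset.card_image_of_injOn (fun a ha b hb h => insert_inj' (hR a ha) (hR b hb) h)

lemma erase_inj_on_mem {σ : Finset V} {a b : V} (ha : a ∈ σ) (h : σ.erase a = σ.erase b) :
    a = b := by
  by_contra hne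
  exact (Finset.mem_erase.1 (h ▸ Finset.mem_erase.2 ⟨hne, ha⟩)).1 rfl

lemma card_ridges (σ : Finset V) : (ridges σ).card = σ.card :=
  Finset.card_image_of_injOn (fun a ha b hb h => erase_inj_on_mem ha h)


lemma joinF_empty_right (A : Finset (Finset V)) : joinF A ∅ = ∅ := by simp [joinF]

lemma joinF_union_right (A B C : Finset (Finset V)) :
    joinF A (B ∪ C) = joinF A B ∪ joinF A C := by
  ext τ; simp only [mem_joinF, Finset.mem_union]; aesop

lemma powerset_inj {σ τ : Finset V} (h : σ.powerset = τ.powerset) : σ = τ := by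
  have h1 := Finset.mem_powerset_self σ
  have h2 := Finset.mem_powerset_self τ
  rw [h] at h1; rw [← h] at h2
  exact subset_antisymm (Finset.mem_powerset.1 h1) (Finset.mem_powerset.1 h2)

lemma restSet_cone {v : V} {σ : Finset V} (hv : v ∉ σ) {R₀ : Finset (Finset V)}
    (hR₀ : R₀ ⊆ ridges σ) :
    restSet (insert v σ) (insert σ (R₀.image (insert v))) = insert v (restSet σ R₀) := by
  have hR₀s : ∀ ρ ∈ R₀, ρ ⊆ σ := by
    intro ρ hρ
    obtain ⟨w, hw, rfl⟩ := mem_ridges.1 (hR₀ hρ)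
    exact Finset.erase_subset _ _
  ext w
  simp only [mem_restSet, Finset.mem_insert]
  constructor
  · rintro ⟨hw1, hw2⟩
    rcases hw1 with rfl | hw
    · exact Or.inl rfl
    · right
      refine ⟨hw, ?_⟩
      have hne : v ≠ w := fun h => hv (h ▸ hw)
      rw [Finset.erase_insert_of_ne hne] at hw2
      rcases hw2 with h | h
      · exact absurd (h ▸ Finset.mem_insert_self v (σ.erase w)) hv
      · obtain ⟨ρ, hρ, heq⟩ := Finset.mem_image.1 h
        have he : ρ = σ.erase w :=
          insert_inj' (fun hc => hv (hR₀s ρ hρ hc))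
            (fun hc => hv (Finset.erase_subset _ _ hc)) heq
        exact he ▸ hρ
  · rintro (rfl | ⟨hw, hmem⟩)
    · exact ⟨Or.inl rfl, by rw [Finset.erase_insert hv]; exact Or.inl rfl⟩
    · have hne : v ≠ w := fun h => hv (h ▸ hw)
      exact ⟨Or.inr hw, by
        rw [Finset.erase_insert_of_ne hne]
        exact Or.inr (Finset.mem_image_of_mem _ hmem)⟩


/-- **Corollary.** Let `T` be a Morse tile and `v` a vertex not in `T`. The cone
`v * T` is a closed simplex iff `T` is, and a regular Morse tile otherwise.
The cone deprived of its basis `v̇ * T` is a Morse tile which is critical iff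
`T` is critical and different from a closed simplex, its index being then
`ind T + 1`. -/
theorem cone_of_morse_tile
    {V : Type*} [DecidableEq V] (T : RelCplx V) (v : V) (hv : v ∉ suppK T)
    (n k : ℕ) (hT : IsMorseTile T n k) :
    (IsClosedSimplexTile ((closedT {v}).join T) ↔ IsClosedSimplexTile T) ∧
    IsMorseTile ((closedT {v}).join T) (n + 1) k ∧
    (¬ IsClosedSimplexTile T →
      ¬ ∃ j, IsCriticalTile ((closedT {v}).join T) (n + 1) j) ∧
    IsMorseTile ((dotT {v}).join T) (n + 1) (k + 1) ∧
    ((∃ j, IsCriticalTile ((dotT {v}).join T) (n + 1) j) ↔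
      ((∃ j, IsCriticalTile T n j) ∧ ¬ IsClosedSimplexTile T)) ∧
    (∀ j, IsCriticalTile T n j → ¬ IsClosedSimplexTile T →
      IsCriticalTile ((dotT {v}).join T) (n + 1) (j + 1)) := by
  obtain ⟨σ, hcard, hK, R, hRr, hRcard, hL⟩ := hT
  have hσK : σ ∈ T.K := by rw [hK]; exact Finset.mem_powerset_self σ
  have hvσ : v ∉ σ := fun h => hv (Finset.mem_sup.2 ⟨σ, hσK, h⟩)
  have hRsub : ∀ ρ ∈ R, ρ ⊆ σ := by
    intro ρ hρ
    obtain ⟨w, hw, rfl⟩ := mem_ridges.1 (hRr hρ)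
    exact Finset.erase_subset _ _
  have hLsub : ∀ τ ∈ T.L, τ ⊆ σ := by
    intro τ hτ
    rcases hL with h | ⟨μ, hμσ, hμnb, hμc, h⟩
    · exact (mem_below.1 (h ▸ hτ)).1
    · rcases Finset.mem_union.1 (h ▸ hτ) with h' | h'
      · exact (mem_below.1 h').1
      · exact (mem_below.1 h').1
  have hσnotL : σ ∉ T.L := by
    rcases hL with h | ⟨μ, hμσ, hμnb, hμc, h⟩
    · rw [h]; exact sigma_not_mem_below hRr
    · rw [h]
      intro hc
      rcases Finset.mem_union.1 hc with h' | h'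
      · exact sigma_not_mem_below hRr h'
      · obtain ⟨-, ρ, hρ, hsub⟩ := mem_below.1 h'
        rw [Finset.mem_singleton] at hρ
        subst hρ
        have := Finset.card_le_card hsub
        omega
  set σ' : Finset V := insert v σ with hσ'
  have hcard' : σ'.card = n + 2 := by
    rw [hσ', Finset.card_insert_of_notMem hvσ, hcard]
  have hCK : ((closedT {v}).join T).K = σ'.powerset := by
    show joinF ({v} : Finset V).powerset T.K = _
    rw [hK]; exact coneK hvσ
  have hCL : ((closedT {v}).join T).L = joinF ({v} : Finset V).powerset T.L := by
    show joinF ∅ T.K ∪ joinF ({v} : Finset V).powerset T.L = _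
    rw [joinF_empty_left, Finset.empty_union]
  have hCLmem : ∀ τ : Finset V, τ ∈ ((closedT {v}).join T).L ↔ τ.erase v ∈ T.L := by
    intro τ
    rw [hCL]
    exact mem_cone (fun τ hτ hvτ => hvσ (hLsub τ hτ hvτ))
  have hDK : ((dotT {v}).join T).K = σ'.powerset := by
    show joinF ({v} : Finset V).powerset T.K = _
    rw [hK]; exact coneK hvσ
  have hDL : ((dotT {v}).join T).L = T.K ∪ joinF ({v} : Finset V).powerset T.L := by
    show joinF (dotT {v}).L T.K ∪ joinF ({v} : Finset V).powerset T.L = _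
    have : (dotT {v}).L = {(∅ : Finset V)} := by
      simp [dotT]
    rw [this, joinF_dot_left]
  have hDLmem : ∀ τ : Finset V, τ ∈ ((dotT {v}).join T).L ↔ (τ ⊆ σ ∨ τ.erase v ∈ T.L) := by
    intro τ
    rw [hDL, Finset.mem_union, hK, Finset.mem_powerset,
      mem_cone (fun τ hτ hvτ => hvσ (hLsub τ hτ hvτ))]
  -- goal 1
  have g1 : IsClosedSimplexTile ((closedT {v}).join T) ↔ IsClosedSimplexTile T := by
    constructor
    · rintro ⟨σ₂, h2K, h2L⟩
      refine ⟨σ, hK, Finset.eq_empty_of_forall_notMem fun τ hτ => ?_⟩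
      have hvτ : v ∉ τ := fun h => hvσ (hLsub τ hτ h)
      have : τ ∈ ((closedT {v}).join T).L :=
        (hCLmem τ).2 (by rw [Finset.erase_eq_of_notMem hvτ]; exact hτ)
      rw [h2L] at this
      exact absurd this (Finset.notMem_empty τ)
    · rintro ⟨σ₂, h2K, h2L⟩
      have hTL : T.L = ∅ := h2L
      exact ⟨σ', hCK, by rw [hCL, hTL, joinF_empty_right]⟩
  -- goal 2
  have g2 : IsMorseTile ((closedT {v}).join T) (n + 1) k := by
    refine ⟨σ', hcard', hCK, R.image (insert v), ?_, ?_, ?_⟩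
    · intro ρ' hρ'
      obtain ⟨ρ, hρ, rfl⟩ := Finset.mem_image.1 hρ'
      exact ridge_cone hvσ (hRr hρ)
    · rw [card_image_insert (fun ρ hρ h => hvσ (hRsub ρ hρ h))]; exact hRcard
    · rcases hL with h | ⟨μ, hμσ, hμnb, hμc, h⟩
      · left
        rw [hCL, h, coneBelow hvσ hRsub]
      · right
        have hvμ : v ∉ μ := fun hc => hvσ (hμσ hc)
        refine ⟨insert v μ, Finset.insert_subset_insert _ hμσ, ?_, ?_, ?_⟩
        · intro hc
          obtain ⟨-, ρ', hρ', hsub⟩ := mem_below.1 hc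
          obtain ⟨ρ, hρ, rfl⟩ := Finset.mem_image.1 hρ'
          have hvρ : v ∉ ρ := fun hc' => hvσ (hRsub ρ hρ hc')
          have : μ ⊆ ρ := (subset_insert_iff' hvμ hvρ).1
            ((Finset.subset_insert v μ).trans hsub)
          exact hμnb (mem_below.2 ⟨hμσ, ρ, hρ, this⟩)
        · rw [Finset.card_insert_of_notMem hvμ, hcard']
          omega
        · rw [hCL, h, joinF_union_right, coneBelow hvσ hRsub,
            coneBelow hvσ (by intro ρ hρ; rw [Finset.mem_singleton] at hρ; exact hρ ▸ hμσ),
            Finset.image_singleton]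
  -- goal 3
  have g3 : ¬ IsClosedSimplexTile T →
      ¬ ∃ j, IsCriticalTile ((closedT {v}).join T) (n + 1) j := by
    intro hnc
    rintro ⟨j, σ₂, h2card, h2K, hcrit⟩
    have hσ₂ : σ₂ = σ' := by rw [hCK] at h2K; exact (powerset_inj h2K).symm
    subst hσ₂
    have hTLne : T.L ≠ ∅ := fun h => hnc ⟨σ, hK, h⟩
    rcases hcrit with ⟨-, hL0⟩ | ⟨hjn, R₁, hR₁r, hR₁c, hLc⟩
    · refine hTLne (Finset.eq_empty_of_forall_notMem fun τ hτ => ?_)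
      have hvτ : v ∉ τ := fun h => hvσ (hLsub τ hτ h)
      have : τ ∈ ((closedT {v}).join T).L :=
        (hCLmem τ).2 (by rw [Finset.erase_eq_of_notMem hvτ]; exact hτ)
      rw [hL0] at this
      exact absurd this (Finset.notMem_empty τ)
    · set m₁ := restSet σ' R₁ with hm₁
      have hσnc : σ ∉ ((closedT {v}).join T).L := by
        rw [hCLmem σ, Finset.erase_eq_of_notMem hvσ]
        exact hσnotL
      have hσR₁ : σ ∉ R₁ := by
        intro h
        exact hσnc (hLc ▸ Finset.mem_union_left _
          (mem_below.2 ⟨Finset.subset_insert _ _, σ, h, Finset.Subset.refl σ⟩))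
      have hvm₁ : v ∉ m₁ := by
        rw [hm₁, mem_restSet]
        rintro ⟨-, h⟩
        rw [Finset.erase_insert hvσ] at h
        exact hσR₁ h
      have hm₁L : m₁ ∈ ((closedT {v}).join T).L := by
        rw [hLc]
        exact Finset.mem_union_right _
          (mem_below.2 ⟨Finset.filter_subset _ _, m₁, Finset.mem_singleton_self _,
            Finset.Subset.refl _⟩)
      have hm₁TL : m₁ ∈ T.L := by
        have := (hCLmem m₁).1 hm₁L
        rwa [Finset.erase_eq_of_notMem hvm₁] at this
      have hins : insert v m₁ ∈ ((closedT {v}).join T).L :=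
        (hCLmem _).2 (by rw [Finset.erase_insert hvm₁]; exact hm₁TL)
      rw [hLc] at hins
      rcases Finset.mem_union.1 hins with h | h
      · obtain ⟨-, ρ, hρ, hsub⟩ := mem_below.1 h
        obtain ⟨w, hw, rfl⟩ := mem_ridges.1 (hR₁r hρ)
        have hwm₁ : w ∈ m₁ := mem_restSet.2 ⟨hw, hρ⟩
        exact (Finset.mem_erase.1 (hsub (Finset.mem_insert_of_mem hwm₁))).1 rfl
      · obtain ⟨-, ρ, hρ, hsub⟩ := mem_below.1 h
        rw [Finset.mem_singleton] at hρ
        subst hρ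
        exact hvm₁ (hsub (Finset.mem_insert_self _ _))
  -- goal 4
  have hσnotim : ∀ R₂ : Finset (Finset V), (∀ ρ ∈ R₂, ρ ⊆ σ) →
      σ ∉ R₂.image (insert v) := by
    intro R₂ hR₂ h
    obtain ⟨ρ, hρ, heq⟩ := Finset.mem_image.1 h
    exact hvσ (heq ▸ Finset.mem_insert_self v ρ)
  have g4 : IsMorseTile ((dotT {v}).join T) (n + 1) (k + 1) := by
    refine ⟨σ', hcard', hDK, insert σ (R.image (insert v)), ?_, ?_, ?_⟩
    · rw [Finset.insert_subset_iff]
      refine ⟨sigma_mem_ridges_cone hvσ, ?_⟩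
      intro ρ' hρ'
      obtain ⟨ρ, hρ, rfl⟩ := Finset.mem_image.1 hρ'
      exact ridge_cone hvσ (hRr hρ)
    · rw [Finset.card_insert_of_notMem (hσnotim R hRsub),
        card_image_insert (fun ρ hρ h => hvσ (hRsub ρ hρ h)), hRcard]
    · rcases hL with h | ⟨μ, hμσ, hμnb, hμc, h⟩
      · left
        rw [hDL, h, hK, coneBelow hvσ hRsub, Finset.insert_eq σ (R.image (insert v)), below_union,
          below_self_ridge hvσ]
      · right
        have hvμ : v ∉ μ := fun hc => hvσ (hμσ hc)
        refine ⟨insert v μ, Finset.insert_subset_insert _ hμσ, ?_, ?_, ?_⟩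
        · intro hc
          obtain ⟨-, ρ', hρ', hsub⟩ := mem_below.1 hc
          rcases Finset.mem_insert.1 hρ' with h' | h'
          · subst h'
            exact hvσ (hsub (Finset.mem_insert_self _ _))
          · obtain ⟨ρ, hρ, rfl⟩ := Finset.mem_image.1 h'
            have hvρ : v ∉ ρ := fun hc' => hvσ (hRsub ρ hρ hc')
            have : μ ⊆ ρ := (subset_insert_iff' hvμ hvρ).1
              ((Finset.subset_insert v μ).trans hsub)
            exact hμnb (mem_below.2 ⟨hμσ, ρ, hρ, this⟩)
        · rw [Finset.card_insert_of_notMem hvμ, hcard']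
          omega
        · rw [hDL, h, hK, joinF_union_right, coneBelow hvσ hRsub,
            coneBelow hvσ (by intro ρ hρ; rw [Finset.mem_singleton] at hρ; exact hρ ▸ hμσ),
            Finset.image_singleton, Finset.insert_eq σ (R.image (insert v)), below_union, below_self_ridge hvσ,
            Finset.union_assoc]
  -- goal 6
  have g6 : ∀ j, IsCriticalTile T n j → ¬ IsClosedSimplexTile T →
      IsCriticalTile ((dotT {v}).join T) (n + 1) (j + 1) := by
    rintro j ⟨σ₂, h2card, h2K, hcase⟩ hnc
    have hσ₂ : σ₂ = σ := by rw [hK] at h2K; exact (powerset_inj h2K).symm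
    subst hσ₂
    rcases hcase with ⟨rfl, hL0⟩ | ⟨hjn, R₀, hR₀r, hR₀c, hL₀⟩
    · exact absurd ⟨σ₂, h2K, hL0⟩ hnc
    · have hR₀sub : ∀ ρ ∈ R₀, ρ ⊆ σ₂ := by
        intro ρ hρ
        obtain ⟨w, hw, rfl⟩ := mem_ridges.1 (hR₀r hρ)
        exact Finset.erase_subset _ _
      have hrs : restSet σ₂ R₀ ⊆ σ₂ := Finset.filter_subset _ _
      refine ⟨σ', hcard', hDK, Or.inr ⟨by omega,
        insert σ₂ (R₀.image (insert v)), ?_, ?_, ?_⟩⟩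
      · rw [Finset.insert_subset_iff]
        refine ⟨sigma_mem_ridges_cone hvσ, ?_⟩
        intro ρ' hρ'
        obtain ⟨ρ, hρ, rfl⟩ := Finset.mem_image.1 hρ'
        exact ridge_cone hvσ (hR₀r hρ)
      · rw [Finset.card_insert_of_notMem (hσnotim R₀ hR₀sub),
          card_image_insert (fun ρ hρ h => hvσ (hR₀sub ρ hρ h)), hR₀c]
      · rw [restSet_cone hvσ hR₀r, hDL, hL₀, hK, joinF_union_right,
          coneBelow hvσ hR₀sub,
          coneBelow hvσ (by intro ρ hρ; rw [Finset.mem_singleton] at hρ; exact hρ ▸ hrs),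
          Finset.image_singleton, Finset.insert_eq σ₂ (R₀.image (insert v)), below_union, below_self_ridge hvσ,
          Finset.union_assoc]
  -- goal 5
  have g5 : (∃ j, IsCriticalTile ((dotT {v}).join T) (n + 1) j) ↔
      ((∃ j, IsCriticalTile T n j) ∧ ¬ IsClosedSimplexTile T) := by
    constructor
    · rintro ⟨j', σ₂, h2card, h2K, hcase⟩
      have hσ₂ : σ₂ = σ' := by rw [hDK] at h2K; exact (powerset_inj h2K).symm
      subst hσ₂
      rcases hcase with ⟨-, hL0⟩ | ⟨hj'n, R₁, hR₁r, hR₁c, hL₁⟩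
      · exfalso
        have : (∅ : Finset V) ∈ ((dotT {v}).join T).L :=
          (hDLmem ∅).2 (Or.inl (Finset.empty_subset σ))
        rw [hL0] at this
        exact absurd this (Finset.notMem_empty _)
      · -- hard direction: `v̇ * T` critical of index `j'` forces `T` critical
        set m₁ := restSet σ' R₁ with hm₁
        have hR₁sub : ∀ ρ ∈ R₁, ρ ⊆ σ' := by
          intro ρ hρ
          obtain ⟨w, hw, rfl⟩ := mem_ridges.1 (hR₁r hρ)
          exact Finset.erase_subset _ _
        have hTLncl : (∅ : Finset V) ∈ T.L → ¬ IsClosedSimplexTile T := by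
          rintro h ⟨σ₃, h3K, h3L⟩
          rw [h3L] at h
          exact Finset.notMem_empty _ h
        have hσdot : σ ∈ below σ' R₁ ∪ below σ' {m₁} := by
          rw [← hL₁]
          exact (hDLmem σ).2 (Or.inl (Finset.Subset.refl σ))
        by_cases hσR₁ : σ ∈ R₁
        · -- case (i): the basis `σ` is a missing ridge of the cone
          set R₀ := (ridges σ).filter (fun ρ => insert v ρ ∈ R₁) with hR₀d
          have hR₀r : R₀ ⊆ ridges σ := Finset.filter_subset _ _
          have hR₀sub : ∀ ρ ∈ R₀, ρ ⊆ σ := by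
            intro ρ hρ
            obtain ⟨w, hw, rfl⟩ := mem_ridges.1 (hR₀r hρ)
            exact Finset.erase_subset _ _
          have hR₁eq : R₁ = insert σ (R₀.image (insert v)) := by
            ext ρ
            constructor
            · intro hρ
              obtain ⟨w, hw, rfl⟩ := mem_ridges.1 (hR₁r hρ)
              rcases Finset.mem_insert.1 hw with rfl | hw'
              · rw [Finset.erase_insert hvσ] at hρ ⊢
                exact Finset.mem_insert_self _ _
              · have hne : v ≠ w := fun h => hvσ (h ▸ hw')
                rw [Finset.erase_insert_of_ne hne] at hρ ⊢
                exact Finset.mem_insert_of_mem (Finset.mem_image_of_mem _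
                  (Finset.mem_filter.2 ⟨mem_ridges.2 ⟨w, hw', rfl⟩, hρ⟩))
            · intro hρ
              rcases Finset.mem_insert.1 hρ with rfl | h'
              · exact hσR₁
              · obtain ⟨ρ₀, hρ₀, rfl⟩ := Finset.mem_image.1 h'
                exact (Finset.mem_filter.1 hρ₀).2
          have hcards : R₁.card = R₀.card + 1 := by
            rw [hR₁eq, Finset.card_insert_of_notMem (hσnotim R₀ hR₀sub),
              card_image_insert (fun ρ hρ h => hvσ (hR₀sub ρ hρ h))]
          have hm₁eq : m₁ = insert v (restSet σ R₀) := by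
            rw [hm₁, hR₁eq]
            exact restSet_cone hvσ hR₀r
          have hrsub : restSet σ R₀ ⊆ σ := Finset.filter_subset _ _
          have hvrs : v ∉ restSet σ R₀ := fun h => hvσ (hrsub h)
          have hTL : T.L = below σ R₀ ∪ below σ {restSet σ R₀} := by
            ext τ
            constructor
            · intro hτ
              have hτσ : τ ⊆ σ := hLsub τ hτ
              have hvτ : v ∉ τ := fun h => hvσ (hτσ h)
              have hins : insert v τ ∈ ((dotT {v}).join T).L :=
                (hDLmem _).2 (Or.inr (by rw [Finset.erase_insert hvτ]; exact hτ))
              rw [hL₁] at hins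
              rcases Finset.mem_union.1 hins with h | h
              · obtain ⟨-, ρ, hρ, hsub⟩ := mem_below.1 h
                rw [hR₁eq] at hρ
                rcases Finset.mem_insert.1 hρ with rfl | h'
                · exact absurd (hsub (Finset.mem_insert_self v τ)) hvσ
                · obtain ⟨ρ₀, hρ₀, rfl⟩ := Finset.mem_image.1 h'
                  have hvρ₀ : v ∉ ρ₀ := fun h => hvσ (hR₀sub ρ₀ hρ₀ h)
                  have hτρ₀ : τ ⊆ ρ₀ := (subset_insert_iff' hvτ hvρ₀).1
                    ((Finset.subset_insert v τ).trans hsub)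
                  exact Finset.mem_union_left _ (mem_below.2 ⟨hτσ, ρ₀, hρ₀, hτρ₀⟩)
              · obtain ⟨-, ρ, hρ, hsub⟩ := mem_below.1 h
                rw [Finset.mem_singleton] at hρ
                subst hρ
                rw [hm₁eq] at hsub
                have hτr : τ ⊆ restSet σ R₀ := (subset_insert_iff' hvτ hvrs).1
                  ((Finset.subset_insert v τ).trans hsub)
                exact Finset.mem_union_right _
                  (mem_below.2 ⟨hτσ, _, Finset.mem_singleton_self _, hτr⟩)
            · intro hτ
              rcases Finset.mem_union.1 hτ with h | h
              · obtain ⟨hτσ, ρ₀, hρ₀, hsub⟩ := mem_below.1 h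
                have hvτ : v ∉ τ := fun h => hvσ (hτσ h)
                have h1 : insert v τ ∈ below σ' R₁ :=
                  mem_below.2 ⟨Finset.insert_subset_insert _ hτσ, insert v ρ₀,
                    by rw [hR₁eq]
                       exact Finset.mem_insert_of_mem (Finset.mem_image_of_mem _ hρ₀),
                    Finset.insert_subset_insert _ hsub⟩
                have h2 : insert v τ ∈ ((dotT {v}).join T).L := by
                  rw [hL₁]
                  exact Finset.mem_union_left _ h1
                rcases (hDLmem _).1 h2 with h3 | h3
                · exact absurd (h3 (Finset.mem_insert_self _ _)) hvσ
                · rwa [Finset.erase_insert hvτ] at h3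
              · obtain ⟨hτσ, ρ₀, hρ₀, hsub⟩ := mem_below.1 h
                rw [Finset.mem_singleton] at hρ₀
                subst hρ₀
                have hvτ : v ∉ τ := fun h => hvσ (hτσ h)
                have h1 : insert v τ ∈ below σ' {m₁} :=
                  mem_below.2 ⟨Finset.insert_subset_insert _ hτσ, m₁,
                    Finset.mem_singleton_self _,
                    by rw [hm₁eq]; exact Finset.insert_subset_insert _ hsub⟩
                have h2 : insert v τ ∈ ((dotT {v}).join T).L := by
                  rw [hL₁]
                  exact Finset.mem_union_right _ h1
                rcases (hDLmem _).1 h2 with h3 | h3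
                · exact absurd (h3 (Finset.mem_insert_self _ _)) hvσ
                · rwa [Finset.erase_insert hvτ] at h3
          refine ⟨⟨R₀.card, σ, hcard, hK, Or.inr ⟨by omega, R₀, hR₀r, rfl, hTL⟩⟩, ?_⟩
          exact hTLncl (hTL ▸ Finset.mem_union_right _
            (mem_below.2 ⟨Finset.empty_subset _, _, Finset.mem_singleton_self _,
              Finset.empty_subset _⟩))
        · -- case (ii): the basis is not missing; then `T` is an open simplex
          have hσm₁ : σ ⊆ m₁ := by
            rcases Finset.mem_union.1 hσdot with h | h
            · exfalso
              obtain ⟨-, ρ, hρ, hsub⟩ := mem_below.1 h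
              obtain ⟨w, hw, rfl⟩ := mem_ridges.1 (hR₁r hρ)
              have heq : σ = σ'.erase w := by
                refine Finset.eq_of_subset_of_card_le hsub ?_
                rw [Finset.card_erase_of_mem hw, hcard', hcard]
                omega
              exact hσR₁ (heq ▸ hρ)
            · obtain ⟨-, ρ, hρ, hsub⟩ := mem_below.1 h
              rw [Finset.mem_singleton] at hρ
              exact hρ ▸ hsub
          have hvm₁ : v ∉ m₁ := by
            rw [hm₁, mem_restSet]
            rintro ⟨-, h⟩
            rw [Finset.erase_insert hvσ] at h
            exact hσR₁ h
          have hm₁σ : m₁ ⊆ σ := (subset_insert_iff' hvm₁ hvσ).1 (Finset.filter_subset _ _)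
          have hallR : ∀ w ∈ σ, insert v (σ.erase w) ∈ R₁ := by
            intro w hw
            obtain ⟨-, h⟩ := mem_restSet.1 (hσm₁ hw)
            rwa [Finset.erase_insert_of_ne (fun h' : v = w => hvσ (h' ▸ hw))] at h
          have hTLiff : ∀ τ : Finset V, τ ∈ T.L ↔ τ ⊆ σ ∧ τ ≠ σ := by
            intro τ
            constructor
            · intro h
              exact ⟨hLsub τ h, fun he => hσnotL (he ▸ h)⟩
            · rintro ⟨hτσ, hne⟩
              obtain ⟨w, hw, hwτ⟩ :=
                Finset.exists_of_ssubset ⟨hτσ, fun h => hne (subset_antisymm hτσ h)⟩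
              have hsub : τ ⊆ σ.erase w := fun x hx =>
                Finset.mem_erase.2 ⟨fun he => hwτ (he ▸ hx), hτσ hx⟩
              have hvτ : v ∉ τ := fun h => hvσ (hτσ h)
              have h1 : insert v τ ∈ below σ' R₁ :=
                mem_below.2 ⟨Finset.insert_subset_insert _ hτσ, insert v (σ.erase w),
                  hallR w hw, Finset.insert_subset_insert _ hsub⟩
              have h2 : insert v τ ∈ ((dotT {v}).join T).L := by
                rw [hL₁]
                exact Finset.mem_union_left _ h1
              rcases (hDLmem _).1 h2 with h3 | h3
              · exact absurd (h3 (Finset.mem_insert_self _ _)) hvσ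
              · rwa [Finset.erase_insert hvτ] at h3
          have hσne : σ.Nonempty := Finset.card_pos.1 (by rw [hcard]; omega)
          obtain ⟨w₀, hw₀⟩ := hσne
          set R₀ := (ridges σ).erase (σ.erase w₀) with hR₀d
          have hR₀r : R₀ ⊆ ridges σ := Finset.erase_subset _ _
          have hR₀c : R₀.card = n := by
            rw [hR₀d, Finset.card_erase_of_mem (mem_ridges.2 ⟨w₀, hw₀, rfl⟩),
              card_ridges, hcard]
            omega
          have hrs₀ : restSet σ R₀ = σ.erase w₀ := by
            ext w
            rw [mem_restSet, hR₀d, Finset.mem_erase, Finset.mem_erase]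
            constructor
            · rintro ⟨hwσ, hne', -⟩
              exact ⟨fun he => hne' (by rw [he]), hwσ⟩
            · rintro ⟨hne, hwσ⟩
              exact ⟨hwσ, fun he => hne (erase_inj_on_mem hwσ he),
                mem_ridges.2 ⟨w, hwσ, rfl⟩⟩
          have hTL : T.L = below σ R₀ ∪ below σ {restSet σ R₀} := by
            rw [hrs₀]
            ext τ
            rw [Finset.mem_union, hTLiff]
            constructor
            · rintro ⟨hτσ, hne⟩
              obtain ⟨w, hw, hwτ⟩ :=
                Finset.exists_of_ssubset ⟨hτσ, fun h => hne (subset_antisymm hτσ h)⟩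
              have hsub : τ ⊆ σ.erase w := fun x hx =>
                Finset.mem_erase.2 ⟨fun he => hwτ (he ▸ hx), hτσ hx⟩
              by_cases hww₀ : w = w₀
              · subst hww₀
                exact Or.inr (mem_below.2 ⟨hτσ, _, Finset.mem_singleton_self _, hsub⟩)
              · exact Or.inl (mem_below.2 ⟨hτσ, σ.erase w,
                  Finset.mem_erase.2 ⟨fun he => hww₀ (erase_inj_on_mem hw he),
                    mem_ridges.2 ⟨w, hw, rfl⟩⟩, hsub⟩)
            · intro h
              rcases h with h | h
              · obtain ⟨hτσ, ρ, hρ, hsub⟩ := mem_below.1 h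
                obtain ⟨w, hw, rfl⟩ := mem_ridges.1 (hR₀r hρ)
                exact ⟨hτσ, fun he => (Finset.mem_erase.1 (hsub (he ▸ hw))).1 rfl⟩
              · obtain ⟨hτσ, ρ, hρ, hsub⟩ := mem_below.1 h
                rw [Finset.mem_singleton] at hρ
                subst hρ
                exact ⟨hτσ, fun he => (Finset.mem_erase.1 (hsub (he ▸ hw₀))).1 rfl⟩
          refine ⟨⟨n, σ, hcard, hK, Or.inr ⟨le_refl n, R₀, hR₀r, hR₀c, hTL⟩⟩, ?_⟩
          exact hTLncl ((hTLiff ∅).2 ⟨Finset.empty_subset _,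
            fun h => Finset.Nonempty.ne_empty ⟨w₀, hw₀⟩ h.symm⟩)
    · rintro ⟨⟨j, hcrit⟩, hnc⟩
      exact ⟨j + 1, g6 j hcrit hnc⟩
  exact ⟨g1, g2, g3, g4, g5, g6⟩


end MorseShelling
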